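/- Fix an integer n′ ≥ 2 and β ∈ (0, 1), set a_k := exp(2πik/n′) and b_k := exp(2πi(k+β)/n′) for k = 1, …, n′, and define the polynomial W̃_β′(z) := [∏_{k=1}^{n′−1} (2 sin(πk/n′))⁻¹] · ∏_{k=1}^{n′} [(z − a_k)(z − b_k) / (2 sin(π(k+β)/n′))]. Then at every zero ξ of W̃_β′ (i.e., at each ξ ∈ {a₁, …, a_{n′}, b₁, …, b_{n′}}) one has |d/dz W̃_β′(ξ)| = 1; that is, the superpotential W̃_β with derivative W̃_β′ satisfies the unit mass condition |W̃_β″| = 1 at each critical point. -/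

import Mathlib

open Polynomial

/-- The polynomial
`W̃_β′(z) = [∏_{k=1}^{n′−1}(2 sin(πk/n′))⁻¹] · ∏_{k=1}^{n′} (z−a_k)(z−b_k)/(2 sin(π(k+β)/n′))`
with `a_k = exp(2πik/n′)`, `b_k = exp(2πi(k+β)/n′)`. -/
noncomputable def JWsuperpotentialDeriv (n' : ℕ) (β : ℝ) : Polynomial ℂ :=
  C ((((∏ k ∈ Finset.Icc 1 (n' - 1), (2 * Real.sin (Real.pi * k / n'))⁻¹) : ℝ) : ℂ) *
      (((∏ k ∈ Finset.Icc 1 n', (2 * Real.sin (Real.pi * (k + β) / n'))⁻¹) : ℝ) : ℂ)) *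
    ∏ k ∈ Finset.Icc 1 n',
      ((X - C (Complex.exp (2 * (Real.pi : ℂ) * Complex.I * (k : ℂ) / (n' : ℂ)))) *
       (X - C (Complex.exp
          (2 * (Real.pi : ℂ) * Complex.I * ((k : ℂ) + (β : ℂ)) / (n' : ℂ)))))

/-!
The `a_k` and `b_k` are the `n`-th roots of `1` and of `ω = exp (2πiβ)`, so
`W̃_β′ = c (zⁿ - 1)(zⁿ - ω)` and at each of its zeros `ξ` (all on the unit circle)
`|W̃_β″(ξ)| = |c| n |1 - ω|`. Since `|2 sin (πx/n)| = |1 - exp (2πix/n)|`, the normalising constant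
satisfies `|c|⁻¹ = ∏_{0<k<n} |1 - ζᵏ| · ∏_k |1 - b_k| = n |1 - ω|` with `ζ = exp (2πi/n)`: the
first product is the value at `1` of `(zⁿ - 1)/(z - 1)`, the second that of `zⁿ - ω`.
-/

open Complex Finset
open scoped Real

theorem Finset.prod_Icc_one_eq_prod_range {M : Type*} [CommMonoid M] (f : ℕ → M) (n : ℕ) :
    ∏ k ∈ Icc 1 n, f k = ∏ k ∈ range n, f (k + 1) := by
  rw [← Ico_add_one_right_eq_Icc, prod_Ico_eq_prod_range, Nat.add_sub_cancel]
  simp_rw [add_comm 1]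

theorem Polynomial.X_pow_sub_C_eq_prod_Icc {R : Type*} [CommRing R] [IsDomain R] {n : ℕ}
    {ζ α a : R} (hζ : IsPrimitiveRoot ζ n) (hn : 0 < n) (e : α ^ n = a) :
    X ^ n - C a = ∏ k ∈ Icc 1 n, (X - C (ζ ^ k * α)) := by
  have e' : (ζ * α) ^ n = a := by rw [mul_pow, hζ.pow_eq_one, one_mul, e]
  rw [X_pow_sub_C_eq_prod hζ hn e', prod_Icc_one_eq_prod_range]
  simp_rw [pow_succ, mul_assoc]

theorem IsPrimitiveRoot.prod_Icc_one_sub_pow {R : Type*} [CommRing R] [IsDomain R] {n : ℕ}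
    {μ : R} (hμ : IsPrimitiveRoot μ n) (hn : 0 < n) :
    ∏ k ∈ Icc 1 (n - 1), (1 - μ ^ k) = n := by
  obtain ⟨m, rfl⟩ : ∃ m, n = m + 1 := ⟨n - 1, by omega⟩
  rw [Nat.add_sub_cancel, prod_Icc_one_eq_prod_range, hμ.prod_one_sub_pow_eq_order]
  push_cast
  rfl

theorem norm_eval_derivative_C_mul_X_pow_sub_one_mul_X_pow_sub_C {𝕜 : Type*} [RCLike 𝕜]
    {n : ℕ} {c ω ξ : 𝕜} (hξ : ‖ξ‖ = 1) (hξn : ξ ^ n = 1 ∨ ξ ^ n = ω) :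
    ‖(derivative (C c * ((X ^ n - 1) * (X ^ n - C ω)))).eval ξ‖ = ‖c‖ * n * ‖1 - ω‖ := by
  have hderiv : (derivative (C c * ((X ^ n - 1) * (X ^ n - C ω)))).eval ξ
      = c * (n * ξ ^ (n - 1)) * ((ξ ^ n - ω) + (ξ ^ n - 1)) := by
    simp only [derivative_mul, derivative_C, derivative_sub, derivative_X_pow, derivative_one,
      eval_add, eval_mul, eval_sub, eval_pow, eval_X, eval_C, eval_one, eval_zero]
    ring
  rw [hderiv]
  rcases hξn with h | h <;>
    simp [h, norm_pow, hξ, norm_sub_rev ω 1]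

namespace Complex

variable (n : ℕ)

theorem exp_two_pi_mul_I_mul_natCast_div (k : ℕ) :
    exp (2 * π * I * k / n) = exp (2 * π * I / n) ^ k := by
  rw [← exp_nat_mul]
  ring_nf

theorem exp_two_pi_mul_I_mul_natCast_add_div (k : ℕ) (x : ℂ) :
    exp (2 * π * I * (k + x) / n) = exp (2 * π * I / n) ^ k * exp (2 * π * I * x / n) := by
  rw [← exp_nat_mul, ← exp_add]
  ring_nf

theorem exp_two_pi_mul_I_mul_div_pow (hn : n ≠ 0) (x : ℂ) :
    exp (2 * π * I * x / n) ^ n = exp (2 * π * I * x) := by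
  rw [← exp_nat_mul]
  congr 1
  field_simp

theorem norm_exp_two_pi_mul_I_mul_ofReal_div (x : ℝ) : ‖exp (2 * π * I * x / n)‖ = 1 := by
  rw [show 2 * π * I * x / n = ((2 * π * x / n : ℝ) : ℂ) * I by push_cast; ring]
  exact norm_exp_ofReal_mul_I _

theorem norm_one_sub_exp_two_pi_mul_I_mul_ofReal_div (x : ℝ) :
    ‖1 - exp (2 * π * I * x / n)‖ = |2 * Real.sin (π * x / n)| := by
  rw [norm_sub_rev, show 2 * π * I * x / n = I * ((2 * π * x / n : ℝ) : ℂ) by push_cast; ring,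
    norm_exp_I_mul_ofReal_sub_one, Real.norm_eq_abs]
  ring_nf

theorem norm_prod_inv_two_sin (s : Finset ℕ) (x : ℕ → ℝ) :
    ‖((∏ k ∈ s, (2 * Real.sin (π * x k / n))⁻¹ : ℝ) : ℂ)‖
      = ‖∏ k ∈ s, (1 - exp (2 * π * I * x k / n))‖⁻¹ := by
  simp_rw [norm_real, Real.norm_eq_abs, abs_prod, norm_prod, ← prod_inv_distrib, abs_inv,
    norm_one_sub_exp_two_pi_mul_I_mul_ofReal_div]

theorem prod_X_sub_C_exp_two_pi_mul_I_mul_add_div (hn : 0 < n) (x : ℂ) :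
    ∏ k ∈ Icc 1 n, (X - C (exp (2 * π * I * (k + x) / n))) = X ^ n - C (exp (2 * π * I * x)) := by
  simp_rw [exp_two_pi_mul_I_mul_natCast_add_div]
  exact (X_pow_sub_C_eq_prod_Icc (isPrimitiveRoot_exp n hn.ne') hn
    (exp_two_pi_mul_I_mul_div_pow n hn.ne' x)).symm

theorem prod_X_sub_C_exp_two_pi_mul_I_mul_div (hn : 0 < n) :
    ∏ k ∈ Icc 1 n, (X - C (exp (2 * π * I * k / n))) = X ^ n - 1 := by
  simpa using prod_X_sub_C_exp_two_pi_mul_I_mul_add_div n hn 0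

end Complex

theorem JWsuperpotentialDeriv_eq_C_mul {n : ℕ} (hn : 0 < n) (β : ℝ) :
    ∃ c : ℂ, ‖c‖ = (n * ‖1 - exp (2 * π * I * β)‖)⁻¹ ∧
      JWsuperpotentialDeriv n β = C c * ((X ^ n - 1) * (X ^ n - C (exp (2 * π * I * β)))) := by
  have hA := prod_X_sub_C_exp_two_pi_mul_I_mul_div n hn
  have hB := prod_X_sub_C_exp_two_pi_mul_I_mul_add_div n hn β
  refine ⟨_, ?_, by rw [JWsuperpotentialDeriv, prod_mul_distrib, hA, hB]⟩
  have hprodA : ∏ k ∈ Icc 1 (n - 1), (1 - exp (2 * π * I * (k : ℝ) / n)) = n := by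
    simp_rw [ofReal_natCast, exp_two_pi_mul_I_mul_natCast_div]
    exact (isPrimitiveRoot_exp n hn.ne').prod_Icc_one_sub_pow hn
  have hprodB : ∏ k ∈ Icc 1 n, (1 - exp (2 * π * I * ((k + β : ℝ) : ℂ) / n))
      = 1 - exp (2 * π * I * β) := by
    simpa [eval_prod] using congrArg (eval 1) hB
  rw [norm_mul, norm_prod_inv_two_sin n _ (fun k => (k : ℝ)),
    norm_prod_inv_two_sin n _ (fun k => (k + β : ℝ)), hprodA, hprodB, norm_natCast, mul_inv]

theorem unit_mass_condition_general (n' : ℕ) (β : ℝ)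
    (hβ : β ∈ Set.Ioo (0 : ℝ) 1) :
    ∀ k ∈ Finset.Icc 1 n',
      ‖((derivative (JWsuperpotentialDeriv n' β)).eval
        (Complex.exp (2 * (Real.pi : ℂ) * Complex.I * (k : ℂ) / (n' : ℂ))))‖ = 1 ∧
      ‖((derivative (JWsuperpotentialDeriv n' β)).eval
        (Complex.exp
          (2 * (Real.pi : ℂ) * Complex.I * ((k : ℂ) + (β : ℂ)) / (n' : ℂ))))‖ = 1 := by
  intro k hk
  have hn : 0 < n' := by grind
  obtain ⟨c, hc, hW⟩ := JWsuperpotentialDeriv_eq_C_mul hn β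
  have hω : ‖1 - exp (2 * π * I * β)‖ ≠ 0 := by
    have hsin := Real.sin_pos_of_pos_of_lt_pi (mul_pos Real.pi_pos hβ.1)
      (mul_lt_of_lt_one_right Real.pi_pos hβ.2)
    have h := norm_one_sub_exp_two_pi_mul_I_mul_ofReal_div 1 β
    simp only [Nat.cast_one, div_one] at h
    rw [h]
    exact abs_ne_zero.2 (mul_pos two_pos hsin).ne'
  have hmass : ∀ ξ : ℂ, ‖ξ‖ = 1 → ξ ^ n' = 1 ∨ ξ ^ n' = exp (2 * π * I * β) →
      ‖(derivative (JWsuperpotentialDeriv n' β)).eval ξ‖ = 1 := by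
    intro ξ hξ hξn
    rw [hW, norm_eval_derivative_C_mul_X_pow_sub_one_mul_X_pow_sub_C hξ hξn, hc]
    field_simp
  constructor
  · refine hmass _ (by simpa using norm_exp_two_pi_mul_I_mul_ofReal_div n' k) (Or.inl ?_)
    rw [exp_two_pi_mul_I_mul_div_pow n' hn.ne', mul_comm]
    exact exp_nat_mul_two_pi_mul_I k
  · refine hmass _ (by simpa using norm_exp_two_pi_mul_I_mul_ofReal_div n' (k + β))
      (Or.inr ?_)
    rw [exp_two_pi_mul_I_mul_div_pow n' hn.ne', mul_add, exp_add, mul_comm _ (k : ℂ),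
      exp_nat_mul_two_pi_mul_I, one_mul]

/-- For `n′ ≥ 2` and `β ∈ (0, 1)`, at every zero `ξ` of `W̃_β′`
(i.e. at each `ξ ∈ {a₁, …, a_{n′}, b₁, …, b_{n′}}`) one has `|d/dz W̃_β′(ξ)| = 1`:
the superpotential satisfies the unit mass condition at each critical point. -/
theorem unit_mass_condition (n' : ℕ) (hn : 2 ≤ n') (β : ℝ)
    (hβ : β ∈ Set.Ioo (0 : ℝ) 1) :
    ∀ k ∈ Finset.Icc 1 n',
      ‖((derivative (JWsuperpotentialDeriv n' β)).eval
        (Complex.exp (2 * (Real.pi : ℂ) * Complex.I * (k : ℂ) / (n' : ℂ))))‖ = 1 ∧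
      ‖((derivative (JWsuperpotentialDeriv n' β)).eval
        (Complex.exp
          (2 * (Real.pi : ℂ) * Complex.I * ((k : ℂ) + (β : ℂ)) / (n' : ℂ))))‖ = 1 :=
  unit_mass_condition_general n' β hβ
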